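/- As v → ∞, e(v; -Δ_{α,a}, -Δ) = (-2cos(2av) + 4π(α₀+α₁)a)/(πav²) + O(v^{-3}). -/

import Mathlib

/-!
Write `u = 4πα₀`, `w = 4πα₁` and `x = e^{2iav}`, so `|x| = 1`. The second summand of `e` is the
complex conjugate of the first, `T = ((u+w)a/2 - iav + x) / (a²(u - iv)(w - iv) - x)`. Subtracting
the expansion `i/(av) + ((u+w)a/2 - x)/(a²v²)` from `T` leaves a numerator of size `O(v)` over
`a²v²` times the denominator of `T`, whose modulus is at least `a²v² - 1`; so the remainder is
`O(v⁻³)`. In `T + T̄` the terms `±i/(av)` cancel and `x + x̄ = 2 cos(2av)` gives the main term.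
-/

open MeasureTheory Real Filter Set Asymptotics

/-- The trace of the relative spectral measure `e(v; -Δ_{α,a}, -Δ)` for two delta
interactions in ℝ³. -/
noncomputable def relSpecMeasureTwoDelta (α₀ α₁ a : ℝ) (v : ℝ) : ℂ :=
  ((a : ℂ) / π) *
    ((2 * π * (α₀ + α₁) * a - Complex.I * a * v + Complex.exp (2 * Complex.I * a * v)) /
        ((a : ℂ) ^ 2 * (4 * π * α₀ - Complex.I * v) * (4 * π * α₁ - Complex.I * v) -
          Complex.exp (2 * Complex.I * a * v)) +
     (2 * π * (α₀ + α₁) * a + Complex.I * a * v + Complex.exp (-(2 * Complex.I * a * v))) /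
        ((a : ℂ) ^ 2 * (4 * π * α₀ + Complex.I * v) * (4 * π * α₁ + Complex.I * v) -
          Complex.exp (-(2 * Complex.I * a * v))))

open Complex (I)
open ComplexConjugate

noncomputable def deltaPhase (a v : ℝ) : ℂ := Complex.exp ((2 * a * v : ℝ) * I)

noncomputable def deltaTerm (u w a v : ℝ) (x : ℂ) : ℂ :=
  ((u + w) * a / 2 - I * a * v + x) / (a ^ 2 * (u - I * v) * (w - I * v) - x)

noncomputable def deltaTermApprox (u w a v : ℝ) (x : ℂ) : ℂ :=
  I / (a * v) + ((u + w) * a / 2 - x) / (a ^ 2 * v ^ 2)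

lemma deltaTerm_sub_deltaTermApprox (u w : ℝ) {a v : ℝ} (ha : a ≠ 0) (hv : v ≠ 0) {x : ℂ}
    (hD : (a : ℂ) ^ 2 * (u - I * v) * (w - I * v) - x ≠ 0) :
    deltaTerm u w a v x - deltaTermApprox u w a v x =
      ((x - (u + w) * a / 2) * (a ^ 2 * u * w - x - I * a ^ 2 * (u + w) * v)
          + I * a * v * (x - a ^ 2 * u * w)) /
        (a ^ 2 * v ^ 2 * (a ^ 2 * (u - I * v) * (w - I * v) - x)) := by
  have ha' : (a : ℂ) ≠ 0 := by exact_mod_cast ha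
  have hv' : (v : ℂ) ≠ 0 := by exact_mod_cast hv
  have hI5 : I ^ 5 = I := by rw [pow_succ, Complex.I_pow_four, one_mul]
  rw [deltaTerm, deltaTermApprox, div_add_div _ _ (by positivity) (by positivity),
    div_sub_div _ _ hD (by positivity), div_eq_div_iff (by positivity) (by positivity)]
  ring_nf
  simp only [Complex.I_sq, Complex.I_pow_three, Complex.I_pow_four, hI5]
  ring

lemma abs_le_norm_ofReal_sub_I_mul (u v : ℝ) : |v| ≤ ‖(u : ℂ) - I * v‖ := by
  simpa using Complex.abs_im_le_norm ((u : ℂ) - I * v)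

lemma sq_sub_one_le_norm_deltaDenom (u w a v : ℝ) {x : ℂ} (hx : ‖x‖ ≤ 1) :
    a ^ 2 * v ^ 2 - 1 ≤ ‖(a : ℂ) ^ 2 * (u - I * v) * (w - I * v) - x‖ := by
  have hprod : a ^ 2 * v ^ 2 ≤ ‖(a : ℂ) ^ 2 * (u - I * v) * (w - I * v)‖ := by
    have hu := abs_le_norm_ofReal_sub_I_mul u v
    have hw := abs_le_norm_ofReal_sub_I_mul w v
    rw [norm_mul, norm_mul, norm_pow, Complex.norm_real, Real.norm_eq_abs, sq_abs]
    calc a ^ 2 * v ^ 2 = a ^ 2 * |v| * |v| := by rw [mul_assoc, ← sq, sq_abs]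
      _ ≤ _ := by gcongr
  linarith [norm_sub_norm_le ((a : ℂ) ^ 2 * (u - I * v) * (w - I * v)) x]

section Bounded

variable (u w : ℝ) {x : ℝ → ℂ}

lemma isBigO_sq_deltaDenom (hx : ∀ v, ‖x v‖ ≤ 1) {a : ℝ} (ha : a ≠ 0) :
    (fun v : ℝ => v ^ 2) =O[atTop]
      fun v => (a : ℂ) ^ 2 * (u - I * v) * (w - I * v) - x v := by
  have ha2 : 0 < a ^ 2 := by positivity
  refine IsBigO.of_bound (2 / a ^ 2) ?_
  filter_upwards [eventually_ge_atTop 1, eventually_ge_atTop (2 / a ^ 2)] with v hv1 hv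
  have := sq_sub_one_le_norm_deltaDenom u w a v (hx v)
  rw [norm_pow, Real.norm_eq_abs, sq_abs, div_mul_eq_mul_div, le_div_iff₀ ha2]
  rw [div_le_iff₀ ha2] at hv
  nlinarith

lemma isBigO_deltaNum (hx : ∀ v, ‖x v‖ ≤ 1) (a : ℝ) :
    (fun v : ℝ => (x v - (u + w) * a / 2) * (a ^ 2 * u * w - x v - I * a ^ 2 * (u + w) * v)
        + I * a * v * (x v - a ^ 2 * u * w)) =O[atTop] fun v => v := by
  have hx1 : x =O[atTop] fun _ => (1 : ℝ) :=
    IsBigO.of_bound 1 (.of_forall fun v => by simpa using hx v)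
  have h1 : (fun _ : ℝ => (1 : ℝ)) =O[atTop] fun v => v := (isLittleO_const_id_atTop 1).isBigO
  have hv : (fun v : ℝ => (v : ℂ)) =O[atTop] fun v => v := isBigO_of_le _ fun v => by simp
  have hc (c : ℂ) : (fun _ : ℝ => c) =O[atTop] fun _ => (1 : ℝ) := isBigO_const_one ℝ c _
  have hfirst := (hx1.sub (hc ((u + w) * a / 2))).mul
    ((((hc (a ^ 2 * u * w)).sub hx1).trans h1).sub (hv.const_mul_left (I * a ^ 2 * (u + w))))
  have hsecond := (hv.const_mul_left (I * a)).mul (hx1.sub (hc (a ^ 2 * u * w)))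
  simp only [one_mul, mul_one] at hfirst hsecond
  exact hfirst.add hsecond

lemma isBigO_deltaTerm_sub_deltaTermApprox (hx : ∀ v, ‖x v‖ ≤ 1) {a : ℝ} (ha : a ≠ 0) :
    (fun v => deltaTerm u w a v (x v) - deltaTermApprox u w a v (x v)) =O[atTop]
      fun v => (v ^ 3)⁻¹ := by
  have hD := isBigO_sq_deltaDenom u w hx ha
  have hscale : (fun v : ℝ => v ^ 2) =O[atTop] fun v => (a : ℂ) ^ 2 * (v : ℂ) ^ 2 :=
    IsBigO.of_bound (a ^ 2)⁻¹ (.of_forall fun v => by simp [ha])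
  have hden := (hscale.mul hD).inv_rev (.of_forall fun v hv => by simp_all)
  refine ((isBigO_deltaNum u w hx a).mul hden).congr' ?_ ?_
  · filter_upwards [eventually_gt_atTop 0, hD.eq_zero_imp] with v hv hDv
    rw [deltaTerm_sub_deltaTermApprox u w ha hv.ne' fun h => hv.ne' (by simpa using hDv h)]
    exact (div_eq_mul_inv _ _).symm
  · filter_upwards [eventually_gt_atTop 0] with v hv
    field_simp

end Bounded

lemma relSpecMeasureTwoDelta_eq_add_conj (α₀ α₁ a v : ℝ) :
    relSpecMeasureTwoDelta α₀ α₁ a v =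
      a / π * (deltaTerm (4 * π * α₀) (4 * π * α₁) a v (deltaPhase a v) +
        conj (deltaTerm (4 * π * α₀) (4 * π * α₁) a v (deltaPhase a v))) := by
  have hphase : deltaPhase a v = Complex.exp (2 * I * a * v) := by
    rw [deltaPhase]; congr 1; push_cast; ring
  have hconj : conj (deltaPhase a v) = Complex.exp (-(2 * I * a * v)) := by
    rw [deltaPhase, ← Complex.exp_conj]
    congr 1
    simp only [map_mul, Complex.conj_ofReal, Complex.conj_I]
    push_cast
    ring
  simp only [deltaTerm, map_div₀, map_add, map_sub, map_mul, map_pow, map_ofNat,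
    Complex.conj_ofReal, Complex.conj_I]
  rw [hconj, hphase, relSpecMeasureTwoDelta]
  push_cast
  ring

lemma deltaTermApprox_add_conj (α₀ α₁ : ℝ) {a v : ℝ} (ha : a ≠ 0) (hv : v ≠ 0) :
    a / π * (deltaTermApprox (4 * π * α₀) (4 * π * α₁) a v (deltaPhase a v) +
        conj (deltaTermApprox (4 * π * α₀) (4 * π * α₁) a v (deltaPhase a v))) =
      (((-2 * Real.cos (2 * a * v) + 4 * π * (α₀ + α₁) * a) / (π * a * v ^ 2) : ℝ) : ℂ) := by
  have hconj : conj (deltaPhase a v) = 2 * Real.cos (2 * a * v) - deltaPhase a v := by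
    have hcos := Complex.add_conj (deltaPhase a v)
    rw [deltaPhase, Complex.exp_ofReal_mul_I_re] at hcos
    rw [deltaPhase]
    push_cast at hcos ⊢
    linear_combination hcos
  have ha' : (a : ℂ) ≠ 0 := by exact_mod_cast ha
  have hv' : (v : ℂ) ≠ 0 := by exact_mod_cast hv
  have hπ : (π : ℂ) ≠ 0 := by exact_mod_cast Real.pi_ne_zero
  simp only [deltaTermApprox, map_div₀, map_add, map_sub, map_mul, map_pow, map_ofNat,
    Complex.conj_ofReal, Complex.conj_I, hconj]
  push_cast
  field_simp
  ring

theorem relSpecMeasureTwoDelta_asymptotic_infty (α₀ α₁ a : ℝ) (ha : 0 < a) :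
    (fun v : ℝ => relSpecMeasureTwoDelta α₀ α₁ a v -
        (((-2 * Real.cos (2 * a * v) + 4 * π * (α₀ + α₁) * a) / (π * a * v ^ 2) : ℝ) : ℂ))
      =O[atTop] fun v : ℝ => v ^ (-3 : ℝ) := by
  set remainder := fun v : ℝ => deltaTerm (4 * π * α₀) (4 * π * α₁) a v (deltaPhase a v)
    - deltaTermApprox (4 * π * α₀) (4 * π * α₁) a v (deltaPhase a v)
  have hremainder : remainder =O[atTop] fun v => (v ^ 3)⁻¹ :=
    isBigO_deltaTerm_sub_deltaTermApprox _ _ (fun v => (Complex.norm_exp_ofReal_mul_I _).le) ha.ne'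
  have hremainder_conj : (fun v => conj (remainder v)) =O[atTop] fun v => (v ^ 3)⁻¹ :=
    isBigO_norm_left.mp (by simpa only [Complex.norm_conj] using isBigO_norm_left.mpr hremainder)
  refine ((hremainder.add hremainder_conj).const_mul_left (a / π : ℂ)).congr' ?_ ?_
  · filter_upwards [eventually_ne_atTop 0] with v hv
    rw [relSpecMeasureTwoDelta_eq_add_conj, ← deltaTermApprox_add_conj α₀ α₁ ha.ne' hv]
    simp only [remainder, map_sub]
    ring
  · filter_upwards [eventually_gt_atTop 0] with v hv
    rw [Real.rpow_neg hv.le, ← Real.rpow_natCast]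
    norm_num
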